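/- Shift operator of H₆ for the block shift sh₂ (Theorem on shift operators of H₆, second case): for all e ∈ ℂ⁹ and u ∈ ℂ, the identity H₆(sh₂(e), u) ∘ (x·∂ + s) = (x·∂ + s + 3) ∘ H₆(e,u) holds in End_ℂ(ℂ[x]) (the accessory parameter is unchanged, α₂ = 0). -/
import Mathlib


open Polynomial

noncomputable section

abbrev EndP := Module.End ℂ (Polynomial ℂ)

/-- The formal derivative `∂` as a linear endomorphism of `ℂ[x]`. -/
def D : EndP := Polynomial.derivative

/-- Multiplication by the polynomial `p` as a linear endomorphism of `ℂ[x]`. -/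
def M (p : Polynomial ℂ) : EndP := LinearMap.mulLeft ℂ p

/-- The Euler operator `θ = x·∂`. -/
def θop : EndP := M X * D

/-- `s = (6 − e₁ − ⋯ − e₉)/3`. -/
def sC (e1 e2 e3 e4 e5 e6 e7 e8 e9 : ℂ) : ℂ :=
  (6 - e1 - e2 - e3 - e4 - e5 - e6 - e7 - e8 - e9) / 3

def T12C (e1 e2 e3 _e4 _e5 _e6 e7 e8 e9 : ℂ) : ℂ :=
  (e1 + e2 + e3) - 2 * (e7 + e8 + e9) - 9

def T11C (e1 e2 e3 e4 e5 e6 e7 e8 e9 : ℂ) : ℂ :=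
  let s11 := e1 + e2 + e3;
  let s12 := e4 + e5 + e6;
  let s13 := e7 + e8 + e9;
  let s21 := e1*e2 + e1*e3 + e2*e3;
  let s22 := e4*e5 + e4*e6 + e5*e6;
  let s23 := e7*e8 + e7*e9 + e8*e9;
  -8 + (s11^2 + 2*s11*s13 - s12^2 + s13^2)/3 + s11 - 5*s13 - s21 + s22 - 2*s23

def T22C (e1 e2 e3 _e4 _e5 _e6 e7 e8 e9 : ℂ) : ℂ :=
  -2 * (e1 + e2 + e3) + (e7 + e8 + e9) + 18

def T21C (e1 e2 e3 e4 e5 e6 e7 e8 e9 : ℂ) : ℂ :=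
  let s11 := e1 + e2 + e3;
  let s12 := e4 + e5 + e6;
  let s13 := e7 + e8 + e9;
  let s21 := e1*e2 + e1*e3 + e2*e3;
  let s22 := e4*e5 + e4*e6 + e5*e6;
  let s23 := e7*e8 + e7*e9 + e8*e9;
  35 + (-s11^2 - 2*s11*s13 + s12^2 - s13^2)/3 - 7*s11 + 5*s13 + 2*s21 - s22 + s23

def T20C (e1 e2 e3 e4 e5 e6 e7 e8 e9 u : ℂ) : ℂ :=
  let s11 := e1 + e2 + e3;
  let s12 := e4 + e5 + e6;
  let s13 := e7 + e8 + e9;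
  let s21 := e1*e2 + e1*e3 + e2*e3;
  let s22 := e4*e5 + e4*e6 + e5*e6;
  let s31 := e1*e2*e3;
  let s32 := e4*e5*e6;
  let s33 := e7*e8*e9;
  -u + 19 + (s11^2*s13 - s11*s12^2 + s11*s13^2 - s12^2*s13)/9
    + (s13^3 + s11^3 - 2*s12^3)/27
    + (-2*s11^2 - 4*s11*s13 + s11*s22 + 2*s12^2 + s22*s12 - 2*s13^2 + s22*s13)/3
    - 5*s11 + 4*s13 + 3*s21 - 2*s22 - s31 - s32 - s33

/-- `B₀(t) = (t+e₇)(t+e₈)(t+e₉)`. -/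
def B0op (e7 e8 e9 : ℂ) (t : EndP) : EndP :=
  (t + e7 • 1) * (t + e8 • 1) * (t + e9 • 1)

/-- `B₁(t) = −3t³ + T₁₂t² + T₁₁t + u`. -/
def B1op (e1 e2 e3 e4 e5 e6 e7 e8 e9 u : ℂ) (t : EndP) : EndP :=
  (-3 : ℂ) • t ^ 3 + (T12C e1 e2 e3 e4 e5 e6 e7 e8 e9) • t ^ 2
    + (T11C e1 e2 e3 e4 e5 e6 e7 e8 e9) • t + u • 1

/-- `B₂(t) = 3t³ + T₂₂t² + T₂₁t + T₂₀`. -/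
def B2op (e1 e2 e3 e4 e5 e6 e7 e8 e9 u : ℂ) (t : EndP) : EndP :=
  (3 : ℂ) • t ^ 3 + (T22C e1 e2 e3 e4 e5 e6 e7 e8 e9) • t ^ 2
    + (T21C e1 e2 e3 e4 e5 e6 e7 e8 e9) • t + (T20C e1 e2 e3 e4 e5 e6 e7 e8 e9 u) • 1

/-- `T₃(t) = −(t+3−e₁)(t+3−e₂)(t+3−e₃)`. -/
def T3op (e1 e2 e3 : ℂ) (t : EndP) : EndP :=
  -((t + (3 - e1) • 1) * (t + (3 - e2) • 1) * (t + (3 - e3) • 1))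

/-- The operator `H₆(e,u)`. -/
def H6op (e1 e2 e3 e4 e5 e6 e7 e8 e9 u : ℂ) : EndP :=
  let s := sC e1 e2 e3 e4 e5 e6 e7 e8 e9;
  (θop + (s + 2) • 1) * (θop + (s + 1) • 1) * (θop + s • 1) * B0op e7 e8 e9 θop
    + (θop + (s + 2) • 1) * (θop + (s + 1) • 1) * B1op e1 e2 e3 e4 e5 e6 e7 e8 e9 u θop * D
    + (θop + (s + 2) • 1) * B2op e1 e2 e3 e4 e5 e6 e7 e8 e9 u θop * D ^ 2
    + T3op e1 e2 e3 θop * D ^ 3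


lemma hDX : D * M X = M X * D + 1 := by
  apply LinearMap.ext; intro p
  simp [D, M, Module.End.mul_apply, derivative_mul]
  ring

lemma Dθ : D * θop = θop * D + D := by
  rw [θop, ← mul_assoc, hDX, add_mul, mul_assoc, one_mul]

lemma Dkey (p : Polynomial ℂ) : D * aeval θop p = aeval θop (p.comp (X + 1)) * D := by
  induction p using Polynomial.induction_on with
  | C a => simp [Algebra.algebraMap_eq_smul_one, smul_mul_assoc, mul_smul_comm]
  | add p q hp hq => simp only [map_add, add_comp, mul_add, add_mul, hp, hq]
  | monomial n a ih =>
      have h : (C a * X ^ (n+1)) = (C a * X ^ n) * X := by ring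
      rw [h, map_mul, aeval_X, ← mul_assoc, ih, mul_assoc, Dθ]
      simp [mul_comp, X_comp, map_add, map_mul, mul_add, add_mul, mul_assoc]

lemma DkeyS (c : ℂ) : D * aeval θop (X + C c) = aeval θop (X + C (c+1)) * D := by
  rw [Dkey]
  congr 2
  simp [add_comp]
  ring

lemma Dkey2 (c : ℂ) : D^2 * aeval θop (X + C c) = aeval θop (X + C (c+2)) * D^2 := by
  rw [sq, mul_assoc, DkeyS, ← mul_assoc, DkeyS, mul_assoc, ← sq]
  congr 3
  ring_nf

lemma Dkey3 (c : ℂ) : D^3 * aeval θop (X + C c) = aeval θop (X + C (c+3)) * D^3 := by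
  rw [pow_succ, mul_assoc, DkeyS, ← mul_assoc, Dkey2, mul_assoc, ← pow_succ]
  congr 3
  ring_nf

lemma hA1 (c : ℂ) : θop + c • (1:EndP) = aeval θop (X + C c) := by
  simp [Algebra.algebraMap_eq_smul_one]

lemma hcube (a b c d : ℂ) : a • θop^3 + b • θop^2 + c • θop + d • (1:EndP)
    = aeval θop (C a * X^3 + C b * X^2 + C c * X + C d) := by
  simp [Algebra.algebraMap_eq_smul_one, smul_mul_assoc]

lemma main_step (p0 p1 p2 p3 q0 q1 q2 q3 : Polynomial ℂ) (c : ℂ)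
    (h0 : q0 * (X + C c) = (X + C (c+3)) * p0)
    (h1 : q1 * (X + C (c+1)) = (X + C (c+3)) * p1)
    (h2 : q2 * (X + C (c+2)) = (X + C (c+3)) * p2)
    (h3 : q3 * (X + C (c+3)) = (X + C (c+3)) * p3) :
    (aeval θop q0 + aeval θop q1 * D + aeval θop q2 * D^2 + aeval θop q3 * D^3)
      * aeval θop (X + C c)
    = aeval θop (X + C (c+3)) *
      (aeval θop p0 + aeval θop p1 * D + aeval θop p2 * D^2 + aeval θop p3 * D^3) := by
  rw [add_mul, add_mul, add_mul, mul_add, mul_add, mul_add]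
  rw [mul_assoc (aeval θop q1), DkeyS, mul_assoc (aeval θop q2), Dkey2,
    mul_assoc (aeval θop q3), Dkey3]
  rw [← mul_assoc (aeval θop q1), ← mul_assoc (aeval θop q2), ← mul_assoc (aeval θop q3),
    ← mul_assoc (aeval θop (X + C (c+3))) (aeval θop p1),
    ← mul_assoc (aeval θop (X + C (c+3))) (aeval θop p2),
    ← mul_assoc (aeval θop (X + C (c+3))) (aeval θop p3)]
  rw [← map_mul, ← map_mul, ← map_mul, ← map_mul, ← map_mul, ← map_mul, ← map_mul, ← map_mul,
    h0, h1, h2, h3]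

/-- Shift operator of `H₆` for the block shift `sh₂ : (e₄,e₅,e₆) → (e₄−1,e₅−1,e₆−1)`:
`H₆(sh₂(e), u) ∘ (x∂ + s) = (x∂ + s + 3) ∘ H₆(e,u)` (the accessory parameter is
unchanged, `α₂ = 0`). -/
theorem H6_shift_operator_sh2 (e1 e2 e3 e4 e5 e6 e7 e8 e9 u : ℂ) :
    H6op e1 e2 e3 (e4 - 1) (e5 - 1) (e6 - 1) e7 e8 e9 u
      * (M X * D + (sC e1 e2 e3 e4 e5 e6 e7 e8 e9) • 1)
    = (M X * D + (sC e1 e2 e3 e4 e5 e6 e7 e8 e9 + 3) • 1)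
      * H6op e1 e2 e3 e4 e5 e6 e7 e8 e9 u := by
  have hs : sC e1 e2 e3 (e4-1) (e5-1) (e6-1) e7 e8 e9
      = sC e1 e2 e3 e4 e5 e6 e7 e8 e9 + 1 := by
    simp only [sC]; ring
  have hT12 : T12C e1 e2 e3 (e4-1) (e5-1) (e6-1) e7 e8 e9
      = T12C e1 e2 e3 e4 e5 e6 e7 e8 e9 := rfl
  have hT22 : T22C e1 e2 e3 (e4-1) (e5-1) (e6-1) e7 e8 e9
      = T22C e1 e2 e3 e4 e5 e6 e7 e8 e9 := rfl
  have hT11 : T11C e1 e2 e3 (e4-1) (e5-1) (e6-1) e7 e8 e9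
      = T11C e1 e2 e3 e4 e5 e6 e7 e8 e9 := by
    simp only [T11C]; ring
  have hT21 : T21C e1 e2 e3 (e4-1) (e5-1) (e6-1) e7 e8 e9
      = T21C e1 e2 e3 e4 e5 e6 e7 e8 e9 := by
    simp only [T21C]; ring
  have hT20 : T20C e1 e2 e3 (e4-1) (e5-1) (e6-1) e7 e8 e9 u
      = T20C e1 e2 e3 e4 e5 e6 e7 e8 e9 u := by
    simp only [T20C]; ring
  rw [show M X * D = θop from rfl]
  simp only [H6op, B0op, B1op, B2op, T3op, hs, hT12, hT22, hT11, hT21, hT20]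
  simp only [hcube, hA1]
  simp only [← map_mul, ← map_neg]
  exact main_step _ _ _ _ _ _ _ _ (sC e1 e2 e3 e4 e5 e6 e7 e8 e9)
    (by simp only [C_add, C_sub, C_1, map_ofNat, map_neg]; ring)
    (by simp only [C_add, C_sub, C_1, map_ofNat, map_neg]; ring)
    (by simp only [C_add, C_sub, C_1, map_ofNat, map_neg]; ring)
    (by simp only [C_add, C_sub, C_1, map_ofNat, map_neg]; ring)
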